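/- Let S be a commutative semigroup. Every piecewise syndetic subset A of S is a J-set. -/

import Mathlib

noncomputable def seqSum {S : Type*} [AddSemigroup S] (f : ℕ → S) (H : Finset ℕ) : S :=
  match (H.sort (· ≤ ·)).map f with
  | [] => f 0
  | a :: l => l.foldl (· + ·) a

def IsJSet {S : Type*} [AddCommSemigroup S] (A : Set S) : Prop :=
  ∀ F : Finset (ℕ → S), F.Nonempty →
    ∃ a : S, ∃ H : Finset ℕ, H.Nonempty ∧ ∀ f ∈ F, a + seqSum f H ∈ A

def negAdd {S : Type*} [Add S] (t : S) (A : Set S) : Set S := {y | t + y ∈ A}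

def IsPWS {S : Type*} [AddSemigroup S] (A : Set S) : Prop :=
  ∃ G : Finset S, G.Nonempty ∧
    ∀ F : Finset S, (⋂ a ∈ F, negAdd a (⋃ t ∈ G, negAdd t A)).Nonempty

section Aux

variable {S : Type*} [AddCommSemigroup S]

local notation "c" => (WithZero.coe : S → WithZero S)

lemma coe_foldl (a : S) (l : List S) :
    WithZero.coe (l.foldl (· + ·) a) = WithZero.coe a + (l.map (WithZero.coe : S → WithZero S)).sum := by
  induction l generalizing a with
  | nil => simp
  | cons b l ih =>
      simp only [List.foldl_cons, List.map_cons, List.sum_cons]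
      rw [ih (a + b)]
      rw [show WithZero.coe (a + b) = WithZero.coe a + WithZero.coe b from rfl, add_assoc]

lemma coe_seqSum (f : ℕ → S) (H : Finset ℕ) (hH : H.Nonempty) :
    WithZero.coe (seqSum f H) = ∑ n ∈ H, WithZero.coe (f n) := by
  have hsort : (H.sort (· ≤ ·)) ≠ [] := by
    intro hnil
    obtain ⟨n, hn⟩ := hH
    have := (Finset.mem_sort (α := ℕ) (· ≤ ·)).mpr hn
    rw [hnil] at this
    simp at this
  obtain ⟨b, L, hbl⟩ := List.exists_cons_of_ne_nil hsort
  have hmap : (H.sort (· ≤ ·)).map f = f b :: L.map f := by rw [hbl]; simp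
  have h1 : seqSum f H = (L.map f).foldl (· + ·) (f b) := by
    unfold seqSum
    rw [hmap]
  have h2 : ∑ n ∈ H, WithZero.coe (f n)
      = (((H.sort (· ≤ ·)).map f).map (WithZero.coe : S → WithZero S)).sum := by
    rw [Finset.sum, ← Finset.sort_eq H (· ≤ ·), Multiset.map_coe, Multiset.sum_coe,
      List.map_map]
    rfl
  rw [h1, h2, hmap]
  rw [List.map_cons, List.sum_cons, coe_foldl]

lemma sum_coe_mem {ι : Type*} (K : Finset ι) (hK : K.Nonempty) (g : ι → S) :
    ∃ s : S, ∑ i ∈ K, WithZero.coe (g i) = WithZero.coe s := by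
  induction hK using Finset.Nonempty.cons_induction with
  | singleton a => exact ⟨g a, by simp⟩
  | cons a K ha hK ih =>
      obtain ⟨s, hs⟩ := ih
      exact ⟨g a + s, by rw [Finset.sum_cons, hs]; rfl⟩

lemma add_sum_coe_mem {ι : Type*} (x : S) (K : Finset ι) (g : ι → S) :
    ∃ s : S, WithZero.coe x + ∑ i ∈ K, WithZero.coe (g i) = WithZero.coe s := by
  rcases K.eq_empty_or_nonempty with h | h
  · exact ⟨x, by simp [h]⟩
  · obtain ⟨s, hs⟩ := sum_coe_mem K h g
    exact ⟨x + s, by rw [hs]; rfl⟩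

end Aux

/-- in a commutative semigroup, every piecewise syndetic set is a J-set. -/
theorem isJSet_of_isPWS {S : Type*} [AddCommSemigroup S] (A : Set S) (h : IsPWS A) :
    IsJSet A := by
  classical
  obtain ⟨G, hG, hFIP⟩ := h
  intro F hF
  set B : Set S := ⋃ t ∈ G, negAdd t A with hB
  -- thickness: B contains a translate of every finite set
  have thick : ∀ K : Finset S, ∃ x : S, ∀ b ∈ K, b + x ∈ B := by
    intro K
    obtain ⟨x, hx⟩ := hFIP K
    refine ⟨x, fun b hb => ?_⟩
    have := Set.mem_iInter₂.mp hx b hb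
    exact this
  haveI : Finite ↥F := FinsetCoe.fintype F |>.finite
  haveI : Finite ↥G := FinsetCoe.fintype G |>.finite
  obtain ⟨ι, ιfin, hHJ⟩ := Combinatorics.Line.exists_mono_in_high_dimension (↥F) (↥G)
  haveI := ιfin
  -- ι is nonempty: any line has a moving coordinate
  have hιne : Nonempty ι := by
    obtain ⟨g0, hg0⟩ := hG
    obtain ⟨l, -⟩ := hHJ (fun _ => (⟨g0, hg0⟩ : ↥G))
    obtain ⟨i, -⟩ := l.proper
    exact ⟨i⟩
  -- embed ι into ℕ
  let e : ι ↪ ℕ :=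
    (Fintype.equivFin ι).toEmbedding.trans ⟨Fin.val, Fin.val_injective⟩
  -- for each word w, the sum of its letters' values
  have hxS : ∀ w : ι → ↥F, ∃ s : S,
      ∑ i : ι, WithZero.coe ((w i : ℕ → S) (e i)) = WithZero.coe s := by
    intro w
    exact sum_coe_mem Finset.univ Finset.univ_nonempty (fun i => (w i : ℕ → S) (e i))
  choose xS hxSspec using hxS
  -- apply thickness to all word-sums
  obtain ⟨a, ha⟩ := thick ((Finset.univ : Finset (ι → ↥F)).image xS)
  have ha' : ∀ w : ι → ↥F, xS w + a ∈ B := fun w =>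
    ha _ (Finset.mem_image_of_mem xS (Finset.mem_univ w))
  -- coloring: which translate of A contains it
  have hcol : ∀ w : ι → ↥F, ∃ t : ↥G, (t : S) + (xS w + a) ∈ A := by
    intro w
    have := ha' w
    rw [hB] at this
    simp only [Set.mem_iUnion] at this
    obtain ⟨t, ht, hmem⟩ := this
    exact ⟨⟨t, ht⟩, hmem⟩
  choose C hC using hcol
  obtain ⟨l, t, hmono⟩ := hHJ C
  -- the moving coordinates
  set Hι : Finset ι := Finset.univ.filter (fun i => l.idxFun i = none) with hHι
  have hHιne : Hι.Nonempty := by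
    obtain ⟨i, hi⟩ := l.proper
    exact ⟨i, by simp [hHι, hi]⟩
  set H : Finset ℕ := Hι.image e with hHdef
  have hHne : H.Nonempty := hHιne.image e
  -- a default letter
  obtain ⟨f₀, hf₀⟩ := hF
  let j₀ : ↥F := ⟨f₀, hf₀⟩
  -- split the sum for a point on the line
  have hsplit : ∀ j : ↥F,
      WithZero.coe (xS (l j))
        = (∑ i ∈ Hιᶜ, WithZero.coe (((l.idxFun i).getD j₀ : ℕ → S) (e i)))
          + WithZero.coe (seqSum (j : ℕ → S) H) := by
    intro j
    rw [← hxSspec (l j), coe_seqSum _ H hHne]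
    rw [hHdef, Finset.sum_image (fun x _ y _ hxy => e.injective hxy)]
    rw [← Finset.sum_add_sum_compl Hι, add_comm]
    congr 1
    · apply Finset.sum_congr rfl
      intro i hi
      have hi' : l.idxFun i ≠ none := by
        simp only [hHι, Finset.mem_compl, Finset.mem_filter, Finset.mem_univ, true_and] at hi
        exact hi
      obtain ⟨c, hc⟩ := Option.ne_none_iff_exists'.mp hi'
      have : l j i = (l.idxFun i).getD j := rfl
      rw [this, hc]
      rfl
    · apply Finset.sum_congr rfl
      intro i hi
      have hi' : l.idxFun i = none := by
        simp only [hHι, Finset.mem_filter, Finset.mem_univ, true_and] at hi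
        exact hi
      have : l j i = (l.idxFun i).getD j := rfl
      rw [this, hi']
      rfl
  -- build the final shift
  obtain ⟨a', ha'spec⟩ := add_sum_coe_mem ((t : S) + a) Hιᶜ
    (fun i => ((l.idxFun i).getD j₀ : ℕ → S) (e i))
  refine ⟨a', H, hHne, ?_⟩
  intro f hf
  set j : ↥F := ⟨f, hf⟩ with hj
  have hmem : (C (l j) : S) + (xS (l j) + a) ∈ A := hC (l j)
  rw [hmono j] at hmem
  have key : WithZero.coe (a' + seqSum f H)
      = WithZero.coe ((t : S) + (xS (l j) + a)) := by
    rw [show WithZero.coe (a' + seqSum f H) = WithZero.coe a' + WithZero.coe (seqSum f H) from rfl,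
      ← ha'spec,
      show WithZero.coe ((t : S) + (xS (l j) + a))
        = WithZero.coe ((t : S) + a) + WithZero.coe (xS (l j)) from by
          rw [show WithZero.coe ((t : S) + a) = WithZero.coe (t : S) + WithZero.coe a from rfl,
            show WithZero.coe ((t:S) + (xS (l j) + a)) = WithZero.coe (t:S) + (WithZero.coe (xS (l j)) + WithZero.coe a) from rfl]
          abel,
      hsplit j]
    have : seqSum (↑j) H = seqSum f H := rfl
    rw [this]
    abel
  have : a' + seqSum f H = (t : S) + (xS (l j) + a) := WithZero.coe_inj.mp key
  rw [this]
  exact hmem
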